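/- Let φ ∈ ℝ. Then there exists a constant c(φ) > 0 such that for all p ∈ (0, ∞), the integral Menger curvature satisfies M_p(E_φ) ≤ c(φ)^p · M_p(E_{π/2}). -/

import Mathlib

open MeasureTheory Real
open scoped ENNReal NNReal Classical

/-- The Menger curvature of three points in `ℝⁿ`: the reciprocal of the circumradius,
`κ(x,y,z) = 2 dist(z, L_{x,y}) / (|x-z| |y-z|)` for pairwise distinct non-collinear points,
and `0` otherwise. -/
noncomputable def menger {n : ℕ} (x y z : EuclideanSpace ℝ (Fin n)) : ℝ :=
  if x ≠ y ∧ y ≠ z ∧ x ≠ z ∧ ¬ Collinear ℝ ({x, y, z} : Set (EuclideanSpace ℝ (Fin n)))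
  then 2 * Metric.infDist z (affineSpan ℝ ({x, y} : Set (EuclideanSpace ℝ (Fin n))) :
      Set (EuclideanSpace ℝ (Fin n))) / (dist x z * dist y z)
  else 0

/-- The point `(a, b) ∈ ℝ²` (with the Euclidean metric). -/
noncomputable def pt (a b : ℝ) : EuclideanSpace ℝ (Fin 2) :=
  (WithLp.equiv 2 (Fin 2 → ℝ)).symm ![a, b]

/-- The one-corner set `E_φ = ([0,1) × {0}) ∪ [0,1)·(cos φ, sin φ)`. -/
noncomputable def Eset (φ : ℝ) : Set (EuclideanSpace ℝ (Fin 2)) :=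
  {x | ∃ t ∈ Set.Ico (0:ℝ) 1, x = pt t 0} ∪
    {x | ∃ t ∈ Set.Ico (0:ℝ) 1, x = t • pt (Real.cos φ) (Real.sin φ)}

/-- Integral Menger curvature `M_p(X)` (innermost integration in `x`). -/
noncomputable def Mp (p : ℝ) (X : Set (EuclideanSpace ℝ (Fin 2))) : ℝ≥0∞ :=
  ∫⁻ z in X, ∫⁻ y in X, ∫⁻ x in X,
    (ENNReal.ofReal (menger x y z)) ^ p ∂μH[1] ∂μH[1] ∂μH[1]

/-- Intermediate energy `I_p(X)`. -/
noncomputable def Ip (p : ℝ) (X : Set (EuclideanSpace ℝ (Fin 2))) : ℝ≥0∞ :=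
  ∫⁻ y in X, ∫⁻ x in X,
    (⨆ z ∈ X, ENNReal.ofReal (menger x y z)) ^ p ∂μH[1] ∂μH[1]

/-- Global curvature energy `U_p(X)`. -/
noncomputable def Up (p : ℝ) (X : Set (EuclideanSpace ℝ (Fin 2))) : ℝ≥0∞ :=
  ∫⁻ x in X, (⨆ y ∈ X, ⨆ z ∈ X, ENNReal.ofReal (menger x y z)) ^ p ∂μH[1]

/-! The shear `shear φ`, fixing `(1, 0)` and sending `(0, 1)` to `(cos φ, sin φ)`, maps `E_{π/2}`
onto `E_φ` and is an isometry on each of the two arms, so `H¹ ⌊ E_φ` is dominated by the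
push-forward of `H¹ ⌊ E_{π/2}` and `M_p(E_φ)` is bounded by the integral over `E_{π/2}` of the
curvature of image triples. If `sin φ ≠ 0` the shear is bi-Lipschitz, and a bi-Lipschitz affine map
multiplies Menger curvature by at most `Lip · antiLip²`; if `sin φ = 0` it collapses the plane onto
a line, where Menger curvature vanishes. -/

open Metric Set

local notation "ℝ²" => EuclideanSpace ℝ (Fin 2)

theorem Collinear.image {k V P V₂ P₂ : Type*} [DivisionRing k] [AddCommGroup V] [Module k V]
    [AddTorsor V P] [AddCommGroup V₂] [Module k V₂] [AddTorsor V₂ P₂] (f : P →ᵃ[k] P₂)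
    {s : Set P} (h : Collinear k s) : Collinear k (f '' s) := by
  rw [collinear_iff_exists_forall_eq_smul_vadd] at h ⊢
  obtain ⟨p₀, v, hv⟩ := h
  refine ⟨f p₀, f.linear v, ?_⟩
  rintro _ ⟨p, hp, rfl⟩
  obtain ⟨r, rfl⟩ := hv p hp
  exact ⟨r, by rw [AffineMap.map_vadd, map_smul]⟩

theorem collinear_range_smul {k V : Type*} [DivisionRing k] [AddCommGroup V] [Module k V]
    (v : V) : Collinear k (range fun t : k => t • v) :=
  collinear_iff_exists_forall_eq_smul_vadd _ |>.2 ⟨0, v, by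
    rintro _ ⟨t, rfl⟩
    exact ⟨t, by simp⟩⟩

theorem LipschitzWith.infDist_image_le {α β : Type*} [PseudoMetricSpace α] [PseudoMetricSpace β]
    {f : α → β} {K : ℝ≥0} (hf : LipschitzWith K f) (x : α) (s : Set α) :
    infDist (f x) (f '' s) ≤ K * infDist x s := by
  rcases s.eq_empty_or_nonempty with rfl | hs
  · simp
  have := hs.to_subtype
  rw [infDist_eq_iInf (s := s), Real.mul_iInf_of_nonneg K.coe_nonneg]
  exact le_ciInf fun y =>
    (infDist_le_dist_of_mem (mem_image_of_mem f y.2)).trans (hf.dist_le_mul x y)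

section Menger

variable {m n : ℕ}

theorem menger_nonneg (x y z : EuclideanSpace ℝ (Fin n)) : 0 ≤ menger x y z := by
  unfold menger
  split_ifs
  · exact div_nonneg (mul_nonneg zero_le_two infDist_nonneg) (by positivity)
  · rfl

theorem menger_eq_zero_of_collinear {x y z : EuclideanSpace ℝ (Fin n)}
    (h : Collinear ℝ ({x, y, z} : Set (EuclideanSpace ℝ (Fin n)))) : menger x y z = 0 :=
  if_neg fun hne => hne.2.2.2 h

theorem menger_map_le (g : EuclideanSpace ℝ (Fin m) →ᵃ[ℝ] EuclideanSpace ℝ (Fin n))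
    {K K' : ℝ≥0} (hg : LipschitzWith K g) (hg' : AntilipschitzWith K' g)
    (x y z : EuclideanSpace ℝ (Fin m)) :
    menger (g x) (g y) (g z) ≤ K * K' ^ 2 * menger x y z := by
  by_cases h : g x ≠ g y ∧ g y ≠ g z ∧ g x ≠ g z ∧
      ¬ Collinear ℝ ({g x, g y, g z} : Set (EuclideanSpace ℝ (Fin n)))
  swap
  · rw [menger, if_neg h]
    exact mul_nonneg (by positivity) (menger_nonneg x y z)
  obtain ⟨hxy, hyz, hxz, hcol⟩ := h
  have hcol₀ : ¬ Collinear ℝ ({x, y, z} : Set (EuclideanSpace ℝ (Fin m))) := fun hc =>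
    hcol (by simpa only [image_insert_eq, image_singleton] using hc.image g)
  rw [menger, if_pos ⟨hxy, hyz, hxz, hcol⟩, menger, if_pos ⟨ne_of_apply_ne g hxy,
    ne_of_apply_ne g hyz, ne_of_apply_ne g hxz, hcol₀⟩]
  set d := infDist z (affineSpan ℝ {x, y} : Set (EuclideanSpace ℝ (Fin m)))
  have hd : infDist (g z) (affineSpan ℝ {g x, g y}) ≤ K * d := by
    rw [← image_pair, ← AffineSubspace.map_span, AffineSubspace.coe_map]
    exact hg.infDist_image_le z _
  have hprod : dist x z * dist y z ≤ K' ^ 2 * (dist (g x) (g z) * dist (g y) (g z)) :=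
    calc dist x z * dist y z ≤ (K' * dist (g x) (g z)) * (K' * dist (g y) (g z)) :=
          mul_le_mul (hg'.le_mul_dist x z) (hg'.le_mul_dist y z) dist_nonneg (by positivity)
      _ = _ := by ring
  have hpos : 0 < dist x z * dist y z :=
    mul_pos (dist_pos.2 (ne_of_apply_ne g hxz)) (dist_pos.2 (ne_of_apply_ne g hyz))
  have hpos' : 0 < dist (g x) (g z) * dist (g y) (g z) := mul_pos (dist_pos.2 hxz) (dist_pos.2 hyz)
  rw [mul_div_assoc', div_le_div_iff₀ hpos' hpos]
  nlinarith [mul_le_mul_of_nonneg_right hd hpos.le,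
    mul_le_mul_of_nonneg_left hprod (mul_nonneg K.coe_nonneg (infDist_nonneg : 0 ≤ d))]

end Menger

theorem MeasureTheory.Measure.restrict_image_union_le_map {X Y : Type*} [EMetricSpace X]
    [MeasurableSpace X] [BorelSpace X] [EMetricSpace Y] [MeasurableSpace Y] [BorelSpace Y] {d : ℝ} (hd : 0 ≤ d)
    {f : X → Y} (hf : Measurable f) {A B : Set X} (hfA : LipschitzOnWith 1 f A)
    (hfB : LipschitzOnWith 1 f B) (hB : MeasurableSet B) (hAB : μH[d] (A ∩ B) = 0) :
    μH[d].restrict (f '' A ∪ f '' B) ≤ (μH[d].restrict (A ∪ B)).map f := by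
  have himage_le : ∀ {T C : Set X}, LipschitzOnWith 1 f C → T ⊆ C → μH[d] (f '' T) ≤ μH[d] T :=
    fun hfC hTC => by simpa using (hfC.mono hTC).hausdorffMeasure_image_le hd
  refine Measure.le_iff.2 fun S hS => ?_
  rw [Measure.restrict_apply hS, Measure.map_apply hf hS, Measure.restrict_apply (hf hS),
    inter_union_distrib_left, inter_union_distrib_left, ← image_preimage_inter,
    ← image_preimage_inter]
  calc μH[d] (f '' (f ⁻¹' S ∩ A) ∪ f '' (f ⁻¹' S ∩ B))
      ≤ μH[d] (f '' (f ⁻¹' S ∩ A)) + μH[d] (f '' (f ⁻¹' S ∩ B)) := measure_union_le _ _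
    _ ≤ μH[d] (f ⁻¹' S ∩ A) + μH[d] (f ⁻¹' S ∩ B) :=
      add_le_add (himage_le hfA inter_subset_right) (himage_le hfB inter_subset_right)
    _ = μH[d] (f ⁻¹' S ∩ A ∪ f ⁻¹' S ∩ B) :=
      (measure_union₀ ((hf hS).inter hB).nullMeasurableSet
        (AEDisjoint.mono hAB inter_subset_right inter_subset_right)).symm

theorem Mp_le_of_restrict_le_map {X Y : Set ℝ²} {f : ℝ² → ℝ²} {C p : ℝ} (hC : 0 ≤ C)
    (hp : 0 ≤ p) (hμ : μH[1].restrict Y ≤ (μH[1].restrict X).map f)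
    (hf : ∀ x y z, menger (f x) (f y) (f z) ≤ C * menger x y z) :
    Mp p Y ≤ ENNReal.ofReal (C ^ p) * Mp p X := by
  have hpush : ∀ F : ℝ² → ℝ≥0∞, ∫⁻ x in Y, F x ∂μH[1] ≤ ∫⁻ x in X, F (f x) ∂μH[1] :=
    fun F => (lintegral_mono' hμ le_rfl).trans (lintegral_map_le F f)
  have hpoint : ∀ x y z, ENNReal.ofReal (menger (f x) (f y) (f z)) ^ p ≤
      ENNReal.ofReal (C ^ p) * ENNReal.ofReal (menger x y z) ^ p := fun x y z => by
    rw [ENNReal.ofReal_rpow_of_nonneg (menger_nonneg _ _ _) hp,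
      ENNReal.ofReal_rpow_of_nonneg (menger_nonneg _ _ _) hp,
      ← ENNReal.ofReal_mul (by positivity),
      ← Real.mul_rpow hC (menger_nonneg _ _ _)]
    exact ENNReal.ofReal_le_ofReal (Real.rpow_le_rpow (menger_nonneg _ _ _) (hf x y z) hp)
  calc Mp p Y
      ≤ ∫⁻ z in X, ∫⁻ y in Y, ∫⁻ x in Y,
          ENNReal.ofReal (menger x y (f z)) ^ p ∂μH[1] ∂μH[1] ∂μH[1] := hpush _
    _ ≤ ∫⁻ z in X, ∫⁻ y in X, ∫⁻ x in Y,
          ENNReal.ofReal (menger x (f y) (f z)) ^ p ∂μH[1] ∂μH[1] ∂μH[1] :=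
      lintegral_mono fun _ => hpush _
    _ ≤ ∫⁻ z in X, ∫⁻ y in X, ∫⁻ x in X,
          ENNReal.ofReal (menger (f x) (f y) (f z)) ^ p ∂μH[1] ∂μH[1] ∂μH[1] :=
      lintegral_mono fun _ => lintegral_mono fun _ => hpush _
    _ ≤ ∫⁻ z in X, ∫⁻ y in X, ∫⁻ x in X,
          ENNReal.ofReal (C ^ p) * ENNReal.ofReal (menger x y z) ^ p ∂μH[1] ∂μH[1] ∂μH[1] :=
      lintegral_mono fun z => lintegral_mono fun y => lintegral_mono fun x => hpoint x y z
    _ = ENNReal.ofReal (C ^ p) * Mp p X := by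
      simp only [lintegral_const_mul' _ _ ENNReal.ofReal_ne_top, Mp]

section Arm

variable {E F : Type*}

def arm [AddCommGroup E] [Module ℝ E] (v : E) : Set E := (fun t : ℝ => t • v) '' Ico 0 1

theorem LinearMap.image_arm [AddCommGroup E] [Module ℝ E] [AddCommGroup F] [Module ℝ F]
    (g : E →ₗ[ℝ] F) (v : E) : g '' arm v = arm (g v) := by
  simp only [arm, image_image, map_smul]

variable [NormedAddCommGroup E] [NormedSpace ℝ E]

theorem ContinuousLinearMap.lipschitzOnWith_one_range_smul [NormedAddCommGroup F]
    [NormedSpace ℝ F] (g : E →L[ℝ] F) {v : E} (hv : ‖g v‖ ≤ ‖v‖) :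
    LipschitzOnWith 1 g (range fun t : ℝ => t • v) := by
  refine LipschitzOnWith.of_dist_le_mul ?_
  rintro _ ⟨s, rfl⟩ _ ⟨t, rfl⟩
  rw [NNReal.coe_one, one_mul, dist_eq_norm, dist_eq_norm, map_smul, map_smul, ← sub_smul,
    ← sub_smul, norm_smul, norm_smul]
  gcongr

theorem measurableSet_arm [MeasurableSpace E] [BorelSpace E] {v : E} (hv : v ≠ 0) :
    MeasurableSet (arm v) :=
  measurableSet_Ico.image_of_continuousOn_injOn (continuous_id.smul continuous_const).continuousOn
    (smul_left_injective ℝ hv).injOn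

end Arm

@[simp] theorem pt_apply_zero (a b : ℝ) : pt a b 0 = a := rfl

@[simp] theorem pt_apply_one (a b : ℝ) : pt a b 1 = b := rfl

theorem smul_pt (t a b : ℝ) : t • pt a b = pt (t * a) (t * b) := by
  ext i; fin_cases i <;> simp

theorem norm_pt (a b : ℝ) : ‖pt a b‖ = √(a ^ 2 + b ^ 2) := by
  simp [EuclideanSpace.norm_eq, Fin.sum_univ_two]

theorem Eset_eq_arm_union (φ : ℝ) : Eset φ = arm (pt 1 0) ∪ arm (pt (cos φ) (sin φ)) := by
  ext x
  simp only [Eset, arm, mem_union, mem_ofPred_eq, mem_image, smul_pt, mul_one, mul_zero, eq_comm]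

theorem Eset_pi_div_two : Eset (π / 2) = arm (pt 1 0) ∪ arm (pt 0 1) := by
  rw [Eset_eq_arm_union, cos_pi_div_two, sin_pi_div_two]

theorem arm_inter_arm_subset : arm (pt 1 0) ∩ arm (pt 0 1) ⊆ {0} := by
  rintro _ ⟨⟨s, -, rfl⟩, ⟨t, -, hts⟩⟩
  have hs : s = 0 := by simpa [smul_pt] using (congrArg (· 0) hts).symm
  simp [hs]

noncomputable def shear (φ : ℝ) : ℝ² →L[ℝ] ℝ² :=
  (EuclideanSpace.proj 0).smulRight (pt 1 0) +
    (EuclideanSpace.proj 1).smulRight (pt (cos φ) (sin φ))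

theorem shear_apply (φ : ℝ) (x : ℝ²) : shear φ x = x 0 • pt 1 0 + x 1 • pt (cos φ) (sin φ) := rfl

theorem shear_pt_one_zero (φ : ℝ) : shear φ (pt 1 0) = pt 1 0 := by
  simp [shear_apply]

theorem shear_pt_zero_one (φ : ℝ) : shear φ (pt 0 1) = pt (cos φ) (sin φ) := by
  simp [shear_apply]

theorem image_shear_Eset_pi_div_two (φ : ℝ) :
    shear φ '' arm (pt 1 0) ∪ shear φ '' arm (pt 0 1) = Eset φ := by
  rw [← ContinuousLinearMap.coe_coe, LinearMap.image_arm, LinearMap.image_arm,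
    ContinuousLinearMap.coe_coe, shear_pt_one_zero, shear_pt_zero_one, Eset_eq_arm_union]

theorem restrict_Eset_le_map_shear (φ : ℝ) :
    μH[1].restrict (Eset φ) ≤ (μH[1].restrict (Eset (π / 2))).map (shear φ) := by
  have := Measure.nullSingletonClass_hausdorff ℝ² one_pos
  have hpt : pt 0 1 ≠ 0 := fun h => by simpa using congrArg (· 1) h
  rw [← image_shear_Eset_pi_div_two, Eset_pi_div_two]
  exact Measure.restrict_image_union_le_map zero_le_one (shear φ).continuous.measurable
    (((shear φ).lipschitzOnWith_one_range_smul (by rw [shear_pt_one_zero])).mono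
      (image_subset_range _ _))
    (((shear φ).lipschitzOnWith_one_range_smul (by simp [shear_pt_zero_one, norm_pt])).mono
      (image_subset_range _ _))
    (measurableSet_arm hpt) (measure_mono_null arm_inter_arm_subset (measure_singleton 0))

theorem shear_mem_range_of_sin_eq_zero {φ : ℝ} (hφ : sin φ = 0) (x : ℝ²) :
    shear φ x ∈ range fun t : ℝ => t • pt 1 0 :=
  ⟨x 0 + x 1 * cos φ, by
    simp only [shear_apply, hφ, add_smul, mul_smul, smul_pt, mul_one, mul_zero]⟩

theorem ker_shear {φ : ℝ} (hφ : sin φ ≠ 0) : LinearMap.ker (shear φ : ℝ² →ₗ[ℝ] ℝ²) = ⊥ := by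
  refine LinearMap.ker_eq_bot'.2 fun x hx => ?_
  have h1 : x 1 * sin φ = 0 := by simpa [shear_apply] using congrArg (· 1) hx
  have h0 : x 0 + x 1 * cos φ = 0 := by simpa [shear_apply] using congrArg (· 0) hx
  have hx1 : x 1 = 0 := (mul_eq_zero.1 h1).resolve_right hφ
  ext i; fin_cases i <;> simp_all

theorem exists_menger_shear_le (φ : ℝ) :
    ∃ C > 0, ∀ x y z, menger (shear φ x) (shear φ y) (shear φ z) ≤ C * menger x y z := by
  by_cases hφ : sin φ = 0
  · refine ⟨1, one_pos, fun x y z => ?_⟩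
    rw [menger_eq_zero_of_collinear ((collinear_range_smul (pt 1 0)).subset ?_)]
    · exact mul_nonneg zero_le_one (menger_nonneg x y z)
    · simp only [insert_subset_iff, singleton_subset_iff, shear_mem_range_of_sin_eq_zero hφ,
        and_self]
  · obtain ⟨K', hK', hanti⟩ := (shear φ : ℝ² →ₗ[ℝ] ℝ²).exists_antilipschitzWith (ker_shear hφ)
    refine ⟨(‖shear φ‖₊ + 1) * K' ^ 2, by positivity, fun x y z => ?_⟩
    exact_mod_cast menger_map_le (shear φ : ℝ² →ₗ[ℝ] ℝ²).toAffineMap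
      ((shear φ).lipschitz.weaken le_self_add) hanti x y z

/-- `M_p(E_φ) ≤ c(φ)^p · M_p(E_{π/2})`. -/
theorem Mp_Eset_le (φ : ℝ) :
    ∃ c : ℝ, 0 < c ∧ ∀ p : ℝ, 0 < p →
      Mp p (Eset φ) ≤ ENNReal.ofReal (c ^ p) * Mp p (Eset (π / 2)) := by
  obtain ⟨C, hC, hmenger⟩ := exists_menger_shear_le φ
  exact ⟨C, hC, fun p hp =>
    Mp_le_of_restrict_le_map hC.le hp.le (restrict_Eset_le_map_shear φ) hmenger⟩
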